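/- arXiv:math/0211158 — 2 statements merged into one kernel-verified Lean document; each statement's English description precedes it below -/
import Mathlib

section
/- Fix n ≥ 0 and let M_n = {(R,m,t) ∈ (ℕ →₀ ℕ) × ℤ × ℤ : R i = 0 for all i > n}. Let S_n = {(R,m,t) ∈ M_n : m ≠ 0, v₂(m) ≤ n, and R i = 0 for every i < v₂(m)} (sources of nonzero differentials in the Tate spectral sequence for BPℝ⟨n⟩) and T_n = {(R,m,t) ∈ M_n : R ≠ 0 and 2^(min(R)+1) divides m} (targets). Then S_n and T_n are disjoint, Φ restricts to a bijection from S_n onto T_n, and the complement of S_n ∪ T_n in M_n is exactly {(R,m,t) ∈ M_n : R = 0 and 2^(n+1) divides m}. (These survivors index the monomial basis σ^(2^(n+1)k) a^t of the Tate coefficients t(BPℝ⟨n⟩)_⋆ = ℤ/2[σ^(2^(n+1)), σ^(−2^(n+1)), a, a⁻¹] of Theorem 2.1(1).) -/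
/-!
Monomials `v_R σ^m a^t` in the E₁-term `BP⟨n⟩_*[σ, σ⁻¹, a, a⁻¹]` of the Tate
spectral sequence for the Real Johnson–Wilson spectrum `BPℝ⟨n⟩` are encoded by
triples `(R, m, t) ∈ (ℕ →₀ ℕ) × ℤ × ℤ` with `R` supported in `{0, …, n}`.
-/

/-- The 2-adic valuation of an integer. -/
noncomputable def v2 (m : ℤ) : ℕ := padicValInt 2 m

/-- `min R`: the least `i` with `R i ≠ 0` (for `R ≠ 0`). -/
noncomputable def minR (R : ℕ →₀ ℕ) : ℕ := sInf {i | R i ≠ 0}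

/-- The Tate differential on monomials:
`Φ(R, m, t) = (R + e_{v₂(m)}, m + 2^(v₂(m)), t + 2^(v₂(m)+1) − 1)`. -/
noncomputable def Φ : (ℕ →₀ ℕ) × ℤ × ℤ → (ℕ →₀ ℕ) × ℤ × ℤ := fun x =>
  (x.1 + Finsupp.single (v2 x.2.1) 1,
   x.2.1 + 2 ^ v2 x.2.1,
   x.2.2 + 2 ^ (v2 x.2.1 + 1) - 1)

/-- `M n`: monomials of `BP⟨n⟩_*[σ, σ⁻¹, a, a⁻¹]`, i.e. `R i = 0` for `i > n`. -/
def M (n : ℕ) : Set ((ℕ →₀ ℕ) × ℤ × ℤ) := {x | ∀ i > n, x.1 i = 0}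

/-- `S n`: the sources of nonzero differentials in the Tate spectral sequence
for `BPℝ⟨n⟩`: `m ≠ 0`, `v₂(m) ≤ n`, and `R i = 0` for every `i < v₂(m)`. -/
def S (n : ℕ) : Set ((ℕ →₀ ℕ) × ℤ × ℤ) :=
  {x ∈ M n | x.2.1 ≠ 0 ∧ v2 x.2.1 ≤ n ∧ ∀ i < v2 x.2.1, x.1 i = 0}

/-- `T n`: the targets: `R ≠ 0` and `2^(min(R)+1) ∣ m`. -/
def T (n : ℕ) : Set ((ℕ →₀ ℕ) × ℤ × ℤ) :=
  {x ∈ M n | x.1 ≠ 0 ∧ (2 : ℤ) ^ (minR x.1 + 1) ∣ x.2.1}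

/-- Candidate inverse of `Φ`. -/
noncomputable def Ψ : (ℕ →₀ ℕ) × ℤ × ℤ → (ℕ →₀ ℕ) × ℤ × ℤ := fun x =>
  (x.1 - Finsupp.single (minR x.1) 1,
   x.2.1 - 2 ^ minR x.1,
   x.2.2 - 2 ^ (minR x.1 + 1) + 1)

lemma two_pow_dvd_iff_le_v2 {m : ℤ} (hm : m ≠ 0) {k : ℕ} :
    (2 : ℤ) ^ k ∣ m ↔ k ≤ v2 m := by
  have h := padicValInt_dvd_iff (p := 2) k m
  push_cast at h
  rw [h]
  simp [hm, v2]

lemma v2_eq_of {m : ℤ} {s : ℕ} (hm : m ≠ 0) (h1 : (2 : ℤ) ^ s ∣ m)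
    (h2 : ¬ (2 : ℤ) ^ (s + 1) ∣ m) : v2 m = s := by
  rw [two_pow_dvd_iff_le_v2 hm] at h1 h2
  omega

lemma v2_dvd {m : ℤ} (hm : m ≠ 0) : (2 : ℤ) ^ (v2 m) ∣ m :=
  (two_pow_dvd_iff_le_v2 hm).mpr le_rfl

lemma v2_not_dvd {m : ℤ} (hm : m ≠ 0) : ¬ (2 : ℤ) ^ (v2 m + 1) ∣ m := by
  rw [two_pow_dvd_iff_le_v2 hm]; omega

lemma dvd_add_pow' {m : ℤ} {s : ℕ} (h1 : (2 : ℤ) ^ s ∣ m)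
    (h2 : ¬ (2 : ℤ) ^ (s + 1) ∣ m) : (2 : ℤ) ^ (s + 1) ∣ m + 2 ^ s := by
  obtain ⟨u, hu⟩ := h1
  have hodd : ¬ (2 : ℤ) ∣ u := by
    rintro ⟨w, rfl⟩
    exact h2 ⟨w, by rw [hu]; ring⟩
  obtain ⟨w, hw⟩ : (2 : ℤ) ∣ (u + 1) := by omega
  refine ⟨w, ?_⟩
  rw [hu]
  linear_combination (2:ℤ) ^ s * hw

lemma minR_mem {R : ℕ →₀ ℕ} (h : R ≠ 0) : R (minR R) ≠ 0 := by
  have hne : {i | R i ≠ 0}.Nonempty := by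
    rw [Finsupp.ne_iff] at h
    obtain ⟨i, hi⟩ := h
    exact ⟨i, by simpa using hi⟩
  exact Nat.sInf_mem hne

lemma minR_le {R : ℕ →₀ ℕ} {i : ℕ} (h : R i ≠ 0) : minR R ≤ i := Nat.sInf_le h

lemma eq_zero_of_lt_minR {R : ℕ →₀ ℕ} {i : ℕ} (h : i < minR R) : R i = 0 := by
  by_contra hc
  exact absurd (minR_le hc) (by omega)

lemma add_single_ne_zero {R : ℕ →₀ ℕ} {s : ℕ} :
    R + Finsupp.single s 1 ≠ 0 := by
  intro h0
  have := congrArg (fun f : ℕ →₀ ℕ => f s) h0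
  simp at this

lemma minR_add_single {R : ℕ →₀ ℕ} {s : ℕ} (h : ∀ i < s, R i = 0) :
    minR (R + Finsupp.single s 1) = s := by
  apply le_antisymm
  · apply minR_le
    simp
  · by_contra hc
    push_neg at hc
    have hmem := minR_mem (R := R + Finsupp.single s 1) add_single_ne_zero
    set j := minR (R + Finsupp.single s 1) with hj
    have hRj : R j = 0 := h j hc
    have : Finsupp.single s 1 j = 0 := Finsupp.single_apply_eq_zero.mpr (by omega)
    simp [hRj, this] at hmem

lemma not_two_pow_succ_dvd_two_pow (s : ℕ) : ¬ (2 : ℤ) ^ (s + 1) ∣ 2 ^ s := by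
  intro h
  have h1 : (0 : ℤ) < 2 ^ s := by positivity
  have h2 := Int.le_of_dvd h1 h
  have : (2 : ℤ) ^ (s + 1) = 2 * 2 ^ s := by ring
  omega

/-- `Φ` maps `S n` into `T n`. -/
lemma mapsTo_Φ (n : ℕ) : Set.MapsTo Φ (S n) (T n) := by
  rintro ⟨R, m, t⟩ ⟨hM, hm, hv, hR⟩
  dsimp only at hM hm hv hR
  have hmin : minR (R + Finsupp.single (v2 m) 1) = v2 m := minR_add_single hR
  refine ⟨?_, ?_, ?_⟩
  · intro i hi
    have h1 : R i = 0 := hM i hi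
    have h2 : Finsupp.single (v2 m) 1 i = 0 :=
      Finsupp.single_apply_eq_zero.mpr (by omega)
    simp [Φ, h1, h2]
  · exact add_single_ne_zero
  · show (2 : ℤ) ^ (minR (R + Finsupp.single (v2 m) 1) + 1) ∣ m + 2 ^ v2 m
    rw [hmin]
    exact dvd_add_pow' (v2_dvd hm) (v2_not_dvd hm)

lemma T_facts {n : ℕ} {R : ℕ →₀ ℕ} {m t : ℤ} (h : (R, m, t) ∈ T n) :
    m - 2 ^ minR R ≠ 0 ∧ v2 (m - 2 ^ minR R) = minR R := by
  obtain ⟨hM, hR0, hdvd⟩ := h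
  dsimp only at hM hR0 hdvd
  set s := minR R with hs
  have hne : m - 2 ^ s ≠ 0 := by
    intro h0
    have : m = 2 ^ s := by omega
    exact not_two_pow_succ_dvd_two_pow s (this ▸ hdvd)
  refine ⟨hne, v2_eq_of hne ?_ ?_⟩
  · have h1 : (2 : ℤ) ^ s ∣ m := dvd_trans (pow_dvd_pow 2 (Nat.le_succ s)) hdvd
    exact dvd_sub h1 dvd_rfl
  · intro h
    have : (2 : ℤ) ^ (s + 1) ∣ 2 ^ s := by
      have := dvd_sub hdvd h
      simpa using this
    exact not_two_pow_succ_dvd_two_pow s this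

/-- `Ψ` maps `T n` into `S n`. -/
lemma mapsTo_Ψ (n : ℕ) : Set.MapsTo Ψ (T n) (S n) := by
  rintro ⟨R, m, t⟩ hT
  obtain ⟨hne, hv2⟩ := T_facts hT
  obtain ⟨hM, hR0, hdvd⟩ := hT
  dsimp only at hM hR0 hdvd
  have hsle : minR R ≤ n := by
    by_contra hc
    push_neg at hc
    exact minR_mem hR0 (hM _ hc)
  refine ⟨?_, hne, ?_, ?_⟩
  · intro i hi
    show (R - Finsupp.single (minR R) 1 : ℕ →₀ ℕ) i = 0
    rw [Finsupp.tsub_apply, hM i hi]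
    simp
  · show v2 (m - 2 ^ minR R) ≤ n
    rw [hv2]; exact hsle
  · intro i hi
    dsimp only [Ψ] at hi
    rw [hv2] at hi
    show (R - Finsupp.single (minR R) 1 : ℕ →₀ ℕ) i = 0
    rw [Finsupp.tsub_apply, eq_zero_of_lt_minR hi]
    simp

lemma invOn : Set.InvOn Ψ Φ (S n) (T n) := by
  constructor
  · rintro ⟨R, m, t⟩ ⟨hM, hm, hv, hR⟩
    dsimp only at hM hm hv hR
    have hmin : minR (R + Finsupp.single (v2 m) 1) = v2 m := minR_add_single hR
    show Ψ (R + Finsupp.single (v2 m) 1, m + 2 ^ v2 m, t + 2 ^ (v2 m + 1) - 1) = (R, m, t)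
    simp only [Ψ, hmin]
    refine Prod.ext ?_ (Prod.ext ?_ ?_)
    · simp
    · simp
    · simp only; ring
  · rintro ⟨R, m, t⟩ hT
    obtain ⟨hne, hv2⟩ := T_facts hT
    obtain ⟨hM, hR0, hdvd⟩ := hT
    show Φ (R - Finsupp.single (minR R) 1, m - 2 ^ minR R, t - 2 ^ (minR R + 1) + 1) = (R, m, t)
    simp only [Φ, hv2]
    refine Prod.ext ?_ (Prod.ext ?_ ?_)
    · simp only
      exact tsub_add_cancel_of_le
        (Finsupp.single_le_iff.mpr (Nat.one_le_iff_ne_zero.mpr (minR_mem hR0)))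
    · simp only; ring
    · simp only; ring

theorem tate_spectral_sequence_BPRn (n : ℕ) :
    -- `S n` and `T n` are disjoint
    Disjoint (S n) (T n) ∧
    -- `Φ` restricts to a bijection from `S n` onto `T n`
    Set.BijOn Φ (S n) (T n) ∧
    -- the survivors: the complement of `S n ∪ T n` in `M n` is exactly the set
    -- of monomials with `R = 0` and `2^(n+1) ∣ m`
    M n \ (S n ∪ T n) = {x ∈ M n | x.1 = 0 ∧ (2 : ℤ) ^ (n + 1) ∣ x.2.1} := by
  refine ⟨?_, ?_, ?_⟩
  · rw [Set.disjoint_left]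
    rintro ⟨R, m, t⟩ ⟨hM, hm, hv, hR⟩ ⟨hM', hR0, hdvd⟩
    have h1 : minR R + 1 ≤ v2 m := (two_pow_dvd_iff_le_v2 hm).mp hdvd
    have h2 : v2 m ≤ minR R := by
      by_contra hc
      push_neg at hc
      exact minR_mem hR0 (hR _ hc)
    omega
  · exact (invOn (n := n)).bijOn (mapsTo_Φ n) (mapsTo_Ψ n)
  · ext ⟨R, m, t⟩
    simp only [Set.mem_diff, Set.mem_union, Set.mem_setOf_eq]
    constructor
    · rintro ⟨hM, hns⟩
      push_neg at hns
      obtain ⟨hnS, hnT⟩ := hns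
      simp only [S, T, Set.mem_setOf_eq, not_and, not_forall] at hnS hnT
      have hR0 : R = 0 := by
        by_contra hR
        have hle : minR R ≤ n := by
          by_contra hc
          push_neg at hc
          exact minR_mem hR (hM _ hc)
        apply hnT hM hR
        rcases eq_or_ne m 0 with rfl | hm
        · exact dvd_zero _
        · rw [two_pow_dvd_iff_le_v2 hm]
          by_contra hc
          push_neg at hc
          obtain ⟨i, hi, hRi⟩ := hnS hM hm (by omega)
          exact hRi (eq_zero_of_lt_minR (by omega))
      refine ⟨hM, hR0, ?_⟩
      rcases eq_or_ne m 0 with rfl | hm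
      · exact dvd_zero _
      · rw [two_pow_dvd_iff_le_v2 hm]
        by_contra hc
        push_neg at hc
        obtain ⟨i, hi, hRi⟩ := hnS hM hm (by omega)
        exact hRi (by rw [hR0]; rfl)
    · rintro ⟨hM, hR0, hdvd⟩
      refine ⟨hM, ?_⟩
      rintro (⟨_, hm, hv, _⟩ | ⟨_, hR, _⟩)
      · have hm' : m ≠ 0 := hm
        have hv' : v2 m ≤ n := hv
        have : n + 1 ≤ v2 m := by rw [← two_pow_dvd_iff_le_v2 hm']; exact hdvd
        omega
      · exact hR hR0
end

section
/- Fix n ≥ 0. Let W be the free ℤ/2-module with basis ℕ × ℕ × ℤ, and let d : W → W be the ℤ/2-linear map sending a basis element (r,j,t) to (r+1, j−1, t + 2^(n+1) − 1) when j is odd, and to 0 when j is even. Then d ∘ d = 0, and ker d / im d is a free ℤ/2-module with basis the classes of the elements (0, j, t) with j even; in particular ker d / im d ≅ ⊕_{(k,t) ∈ ℕ × ℤ} ℤ/2, corresponding to the coefficients ℤ/2[σ^(−2^(n+1)), a, a⁻¹] of the geometric spectrum Ẽℤ/2 ∧ BPℝ⟨n⟩ (Proposition 4.2). -/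
/-!
Monomials `v_n^r σ^(−2^n j) a^t` of the E₁-term `ℤ/2[σ^(−2^n), a, a⁻¹][v_n]`
of the spectral sequence computing the coefficients of the geometric spectrum
`Ẽℤ/2 ∧ BPℝ⟨n⟩` are encoded by triples `(r, j, t) ∈ ℕ × ℕ × ℤ`.  `W` is the
free `ℤ/2`-module on these triples, and `d n` encodes the differential
`d₁(v_n^r σ^(−2^n j) a^t) = j · v_n^(r+1) σ^(−2^n (j−1)) a^(t + 2^(n+1) − 1)`.
-/

/-- The free `ℤ/2`-module with basis `ℕ × ℕ × ℤ`. -/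
abbrev W : Type := (ℕ × ℕ × ℤ) →₀ ZMod 2

open Classical in
/-- The `ℤ/2`-linear differential: a basis element `(r, j, t)` is sent to
`(r+1, j−1, t + 2^(n+1) − 1)` when `j` is odd, and to `0` when `j` is even. -/
noncomputable def d (n : ℕ) : W →ₗ[ZMod 2] W :=
  Finsupp.lift W (ZMod 2) (ℕ × ℕ × ℤ) fun x =>
    if Odd x.2.1 then
      Finsupp.single (x.1 + 1, x.2.1 - 1, x.2.2 + 2 ^ (n + 1) - 1) (1 : ZMod 2)
    else 0

/-- The homology `ker (d n) / im (d n)`: the quotient of `ker (d n)` by the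
image of `d n` (viewed as a submodule of `ker (d n)`). -/
abbrev GeomHomology (n : ℕ) : Type :=
  @HasQuotient.Quotient _ _
    (Submodule.hasQuotient (M := LinearMap.ker (d n)) (R := ZMod 2))
    (Submodule.comap (LinearMap.ker (d n)).subtype (LinearMap.range (d n)))

/-!
The differential only links `(r, 2k+1, t)` to `(r+1, 2k, t + 2^(n+1) - 1)`, so `W` splits into
two-term acyclic pieces plus the monomials `(0, 2k, t)`, which are neither hit by `d` nor hit
anything. Shifting back along `d` is a homotopy between the identity and the projection onto
those monomials, so the homology is the free module they span.
-/

namespace LinearMap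

variable {R M N : Type*} [Ring R] [AddCommGroup M] [Module R M] [AddCommGroup N] [Module R N]

variable (d : M →ₗ[R] M) (ι : N →ₗ[R] M) (π : M →ₗ[R] N) (h : M →ₗ[R] M)
  (hdι : d ∘ₗ ι = 0) (hπd : π ∘ₗ d = 0) (hπι : π ∘ₗ ι = id)
  (hhtpy : ι ∘ₗ π + (d ∘ₗ h + h ∘ₗ d) = id)

noncomputable def homologyEquivOfRetract : (ker d ⧸ (range d).comap (ker d).subtype) ≃ₗ[R] N :=
  LinearEquiv.ofLinearMap
    ((range d).comap (ker d).subtype |>.liftQ (π ∘ₗ (ker d).subtype) <| by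
      rintro ⟨-, -⟩ ⟨y, rfl⟩
      exact congr($hπd y))
    ((Submodule.mkQ _) ∘ₗ ι.codRestrict (ker d) fun y => congr($hdι y))
    (by ext y; exact congr($hπι y))
    (by
      refine Submodule.linearMap_qext _ (ext fun ⟨x, hx⟩ => ?_)
      refine (Submodule.Quotient.eq _).2 ⟨-(h x), ?_⟩
      have hx' : d x = 0 := hx
      have := congr($hhtpy x)
      simp only [add_apply, comp_apply, hx', map_zero, add_zero, id_apply] at this
      simp only [Submodule.mkQ_apply, Submodule.liftQ_apply, comp_apply, Submodule.subtype_apply,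
        codRestrict_apply, AddSubgroupClass.coe_sub, map_neg]
      linear_combination (norm := module) -this)

@[simp]
lemma homologyEquivOfRetract_symm_apply (y : N) :
    (homologyEquivOfRetract d ι π h hdι hπd hπι hhtpy).symm y =
      Submodule.Quotient.mk ⟨ι y, congr($hdι y)⟩ :=
  rfl

end LinearMap

open Finsupp

lemma d_single (n r j : ℕ) (t : ℤ) (c : ZMod 2) :
    d n (single (r, j, t) c) =
      if Odd j then single (r + 1, j - 1, t + 2 ^ (n + 1) - 1) c else 0 := by
  split_ifs <;> simp [d, lift_apply, *]

lemma d_single_two_mul (n r k : ℕ) (t : ℤ) (c : ZMod 2) : d n (single (r, 2 * k, t) c) = 0 := by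
  simp [d_single, Nat.not_odd_iff_even.2 (even_two_mul k)]

lemma d_single_two_mul_add_one (n r k : ℕ) (t : ℤ) (c : ZMod 2) :
    d n (single (r, 2 * k + 1, t) c) = single (r + 1, 2 * k, t + 2 ^ (n + 1) - 1) c := by
  simp [d_single]

lemma d_comp_d (n : ℕ) : d n ∘ₗ d n = 0 := by
  ext ⟨r, j, t⟩ : 2
  obtain ⟨k, rfl | rfl⟩ := Nat.even_or_odd' j <;> simp [d_single_two_mul, d_single_two_mul_add_one]

/-- Undoes `d n` on every monomial other than the `(0, 2k, t)`. -/
noncomputable def retractHomotopy (n : ℕ) : W →ₗ[ZMod 2] W :=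
  Finsupp.lift W (ZMod 2) (ℕ × ℕ × ℤ) fun
    | (r + 1, j, t) => if Even j then single (r, j + 1, t - 2 ^ (n + 1) + 1) 1 else 0
    | (0, _, _) => 0

/-- The monomial `(0, 2k, t)`, i.e. `σ^(−2^(n+1) k) a^t`, indexed by `(k, t)`. -/
noncomputable def evenBottomIncl : ((ℕ × ℤ) →₀ ZMod 2) →ₗ[ZMod 2] W :=
  Finsupp.lmapDomain (ZMod 2) (ZMod 2) fun p => (0, 2 * p.1, p.2)

noncomputable def evenBottomProj : W →ₗ[ZMod 2] ((ℕ × ℤ) →₀ ZMod 2) :=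
  Finsupp.lift _ (ZMod 2) (ℕ × ℕ × ℤ) fun
    | (0, j, t) => if Even j then single (j / 2, t) 1 else 0
    | (_ + 1, _, _) => 0

lemma d_comp_evenBottomIncl (n : ℕ) : d n ∘ₗ evenBottomIncl = 0 := by
  ext ⟨k, t⟩ : 2
  simp [evenBottomIncl, d_single_two_mul]

lemma evenBottomProj_comp_d (n : ℕ) : evenBottomProj ∘ₗ d n = 0 := by
  ext ⟨r, j, t⟩ : 2
  obtain ⟨k, rfl | rfl⟩ := Nat.even_or_odd' j <;>
    simp [evenBottomProj, d_single_two_mul, d_single_two_mul_add_one, lift_apply]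

lemma evenBottomProj_comp_evenBottomIncl : evenBottomProj ∘ₗ evenBottomIncl = LinearMap.id := by
  ext ⟨k, t⟩ : 2
  simp [evenBottomProj, evenBottomIncl, lift_apply]

lemma evenBottomIncl_comp_evenBottomProj_add_homotopy (n : ℕ) :
    evenBottomIncl ∘ₗ evenBottomProj + (d n ∘ₗ retractHomotopy n + retractHomotopy n ∘ₗ d n) =
      LinearMap.id := by
  ext ⟨r, j, t⟩ : 2
  obtain ⟨k, rfl | rfl⟩ := Nat.even_or_odd' j <;> rcases r with _ | r <;>
    simp [evenBottomProj, evenBottomIncl, retractHomotopy, d_single_two_mul,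
      d_single_two_mul_add_one, lift_apply] <;>
    ring_nf

theorem geometric_spectrum_homology_BPRn (n : ℕ) :
    d n ∘ₗ d n = 0 ∧
    ∃ b : Module.Basis (ℕ × ℤ) (ZMod 2) (GeomHomology n),
      (∀ (k : ℕ) (t : ℤ),
        ∃ h : Finsupp.single ((0 : ℕ), 2 * k, t) (1 : ZMod 2) ∈ LinearMap.ker (d n),
          b (k, t) = Submodule.Quotient.mk
            ⟨Finsupp.single ((0 : ℕ), 2 * k, t) (1 : ZMod 2), h⟩) ∧
      Nonempty (GeomHomology n ≃ₗ[ZMod 2] ((ℕ × ℤ) →₀ ZMod 2)) := by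
  let e : GeomHomology n ≃ₗ[ZMod 2] ((ℕ × ℤ) →₀ ZMod 2) :=
    LinearMap.homologyEquivOfRetract (d n) evenBottomIncl evenBottomProj (retractHomotopy n)
      (d_comp_evenBottomIncl n) (evenBottomProj_comp_d n) evenBottomProj_comp_evenBottomIncl
      (evenBottomIncl_comp_evenBottomProj_add_homotopy n)
  refine ⟨d_comp_d n, Finsupp.basisSingleOne.map e.symm,
    fun k t => ⟨d_single_two_mul n 0 k t 1, ?_⟩, ⟨e⟩⟩
  simp [e, evenBottomIncl]
end
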